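/- (Proposition 3.1) Let G be a second countable LCA group and Λ a closed subgroup of Ĝ. The function θ(V, W) = inf{α > 0 : m({x ∈ Π : ∥P_{J_V}(x) − P_{J_W}(x)∥ > α}) = 0} is a metric on MI(G), the collection of all Λ-modulation invariant subspaces of L²(G) (with spaces identified when their range functions agree a.e.): θ is nonnegative, θ(V,W) = 0 iff V = W, θ is symmetric, and θ satisfies the triangle inequality. -/

import Mathlib

open MeasureTheory
open scoped ENNReal

/-! Each `P W x` is the orthogonal projection onto the closed subspace `J W x`, so it has norm at
most 1 and determines `J W x`. Hence θ is the essential supremum of the bounded function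
`x ↦ ‖P V x - P W x‖`, which makes it nonnegative, symmetric and subadditive; and θ(V, W) = 0
forces `J V = J W` almost everywhere, which by the range-function description of modulation
invariant spaces gives `V = W`. -/

/-- The modulation metric
θ(V, W) = inf{α > 0 : m({x ∈ Π : ‖P_{J_V}(x) − P_{J_W}(x)‖ > α}) = 0},
here expressed via an assignment P of (projection-valued) range functions. -/
noncomputable def modMetric {X H ι : Type*} [MeasurableSpace X]
    [NormedAddCommGroup H] [NormedSpace ℂ H]
    (m' : MeasureTheory.Measure X) (P : ι → X → H →L[ℂ] H) (V W : ι) : ℝ :=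
  sInf {α : ℝ | 0 < α ∧ m' {x | α < ‖P V x - P W x‖} = 0}

section PosEssUpperBounds

open scoped Pointwise

variable {X : Type*} [MeasurableSpace X] {μ : Measure X} {d d₁ d₂ : X → ℝ}

def posEssUpperBounds (μ : Measure X) (d : X → ℝ) : Set ℝ :=
  {α | 0 < α ∧ μ {x | α < d x} = 0}

theorem mem_posEssUpperBounds {α : ℝ} :
    α ∈ posEssUpperBounds μ d ↔ 0 < α ∧ ∀ᵐ x ∂μ, d x ≤ α := by
  simp only [posEssUpperBounds, Set.mem_ofPred_eq, ae_iff, not_le]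

theorem bddBelow_posEssUpperBounds : BddBelow (posEssUpperBounds μ d) :=
  ⟨0, fun _ hα => hα.1.le⟩

theorem nonempty_posEssUpperBounds {C : ℝ} (h : ∀ x, d x ≤ C) :
    (posEssUpperBounds μ d).Nonempty :=
  ⟨max C 1, mem_posEssUpperBounds.2
    ⟨lt_max_of_lt_right one_pos, ae_of_all _ fun x => (h x).trans (le_max_left _ _)⟩⟩

theorem posEssUpperBounds_eq_Ioi (h : ∀ᵐ x ∂μ, d x ≤ 0) :
    posEssUpperBounds μ d = Set.Ioi 0 := by
  ext α
  simp only [mem_posEssUpperBounds, Set.mem_Ioi, and_iff_left_iff_imp]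
  exact fun hα => h.mono fun x hx => hx.trans hα.le

theorem ae_nonpos_of_sInf_posEssUpperBounds_eq_zero (hne : (posEssUpperBounds μ d).Nonempty)
    (h : sInf (posEssUpperBounds μ d) = 0) : ∀ᵐ x ∂μ, d x ≤ 0 := by
  have hbound : ∀ n : ℕ, ∀ᵐ x ∂μ, d x ≤ 1 / (n + 1) := fun n => by
    obtain ⟨α, hα, hαn⟩ := exists_lt_of_csInf_lt hne (h ▸ Nat.one_div_pos_of_nat)
    exact (mem_posEssUpperBounds.1 hα).2.mono fun x hx => hx.trans hαn.le
  filter_upwards [ae_all_iff.2 hbound] with x hx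
  exact ge_of_tendsto' tendsto_one_div_add_atTop_nhds_zero_nat hx

theorem sInf_posEssUpperBounds_eq_zero_iff (hne : (posEssUpperBounds μ d).Nonempty) :
    sInf (posEssUpperBounds μ d) = 0 ↔ ∀ᵐ x ∂μ, d x ≤ 0 :=
  ⟨ae_nonpos_of_sInf_posEssUpperBounds_eq_zero hne,
    fun h => (posEssUpperBounds_eq_Ioi h).symm ▸ csInf_Ioi⟩

theorem add_posEssUpperBounds_subset {d₃ : X → ℝ} (hd : ∀ x, d₃ x ≤ d₁ x + d₂ x) :
    posEssUpperBounds μ d₁ + posEssUpperBounds μ d₂ ⊆ posEssUpperBounds μ d₃ := by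
  rintro _ ⟨a, ha, b, hb, rfl⟩
  rw [mem_posEssUpperBounds] at ha hb ⊢
  refine ⟨add_pos ha.1 hb.1, ?_⟩
  filter_upwards [ha.2, hb.2] with x hxa hxb
  exact (hd x).trans (add_le_add hxa hxb)

theorem sInf_posEssUpperBounds_le_add {d₃ : X → ℝ} (hd : ∀ x, d₃ x ≤ d₁ x + d₂ x)
    (h₁ : (posEssUpperBounds μ d₁).Nonempty) (h₂ : (posEssUpperBounds μ d₂).Nonempty) :
    sInf (posEssUpperBounds μ d₃) ≤
      sInf (posEssUpperBounds μ d₁) + sInf (posEssUpperBounds μ d₂) := by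
  rw [← csInf_add h₁ bddBelow_posEssUpperBounds h₂ bddBelow_posEssUpperBounds]
  exact csInf_le_csInf bddBelow_posEssUpperBounds (h₁.add h₂) (add_posEssUpperBounds_subset hd)

end PosEssUpperBounds

section ModMetric

variable {X H ι : Type*} [MeasurableSpace X] [NormedAddCommGroup H] [NormedSpace ℂ H]
  {m' : Measure X} {P : ι → X → H →L[ℂ] H} {V W U : ι} {C : ℝ}

theorem modMetric_eq_sInf_posEssUpperBounds (m' : Measure X) (P : ι → X → H →L[ℂ] H)
    (V W : ι) : modMetric m' P V W = sInf (posEssUpperBounds m' fun x => ‖P V x - P W x‖) :=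
  rfl

theorem modMetric_nonneg : 0 ≤ modMetric m' P V W :=
  Real.sInf_nonneg fun _ hα => hα.1.le

theorem modMetric_comm : modMetric m' P V W = modMetric m' P W V := by
  simp only [modMetric_eq_sInf_posEssUpperBounds, norm_sub_rev]

theorem nonempty_posEssUpperBounds_norm_sub (hV : ∀ x, ‖P V x‖ ≤ C) (hW : ∀ x, ‖P W x‖ ≤ C) :
    (posEssUpperBounds m' fun x => ‖P V x - P W x‖).Nonempty :=
  nonempty_posEssUpperBounds fun x => (norm_sub_le _ _).trans (add_le_add (hV x) (hW x))

theorem modMetric_eq_zero_iff (hV : ∀ x, ‖P V x‖ ≤ C) (hW : ∀ x, ‖P W x‖ ≤ C) :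
    modMetric m' P V W = 0 ↔ ∀ᵐ x ∂m', P V x = P W x := by
  rw [modMetric_eq_sInf_posEssUpperBounds,
    sInf_posEssUpperBounds_eq_zero_iff (nonempty_posEssUpperBounds_norm_sub hV hW)]
  simp only [norm_le_zero_iff, sub_eq_zero]

theorem modMetric_le_add (hV : ∀ x, ‖P V x‖ ≤ C) (hU : ∀ x, ‖P U x‖ ≤ C)
    (hW : ∀ x, ‖P W x‖ ≤ C) : modMetric m' P V W ≤ modMetric m' P V U + modMetric m' P U W :=
  sInf_posEssUpperBounds_le_add (fun _ => norm_sub_le_norm_sub_add_norm_sub _ _ _)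
    (nonempty_posEssUpperBounds_norm_sub hV hU) (nonempty_posEssUpperBounds_norm_sub hU hW)

end ModMetric

section OrthogonalProjection

variable {𝕜 E : Type*} [RCLike 𝕜] [NormedAddCommGroup E] [InnerProductSpace 𝕜 E]

def IsOrthogonalProjectionOnto (T : E →L[𝕜] E) (K : Submodule 𝕜 E) : Prop :=
  ∀ v, T v ∈ K ∧ ∀ w ∈ K, (inner 𝕜 (v - T v) w : 𝕜) = 0

namespace IsOrthogonalProjectionOnto

variable {T : E →L[𝕜] E} {K K' : Submodule 𝕜 E}

theorem eq_starProjection [K.HasOrthogonalProjection] (hT : IsOrthogonalProjectionOnto T K) :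
    T = K.starProjection :=
  ContinuousLinearMap.ext fun v =>
    (K.eq_starProjection_of_mem_of_inner_eq_zero (hT v).1 (hT v).2).symm

variable [CompleteSpace E]

theorem norm_le_one (hK : IsClosed (K : Set E)) (hT : IsOrthogonalProjectionOnto T K) :
    ‖T‖ ≤ 1 := by
  have := hK.completeSpace_coe
  exact hT.eq_starProjection ▸ K.starProjection_norm_le

theorem submodule_unique (hK : IsClosed (K : Set E)) (hK' : IsClosed (K' : Set E))
    (hT : IsOrthogonalProjectionOnto T K) (hT' : IsOrthogonalProjectionOnto T K') : K = K' := by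
  have := hK.completeSpace_coe
  have := hK'.completeSpace_coe
  rw [← Submodule.starProjection_inj, ← hT.eq_starProjection, ← hT'.eq_starProjection]

end IsOrthogonalProjectionOnto

end OrthogonalProjection

theorem eq_of_mem_iff_ae_mem {α β X : Type*} [MeasurableSpace X] {μ : Measure X}
    (φ : α → X → β) {V W : Set α} {JV JW : X → Set β}
    (hV : ∀ f, f ∈ V ↔ ∀ᵐ x ∂μ, φ f x ∈ JV x) (hW : ∀ f, f ∈ W ↔ ∀ᵐ x ∂μ, φ f x ∈ JW x)
    (hJ : ∀ᵐ x ∂μ, JV x = JW x) : V = W := by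
  ext f
  rw [hV, hW]
  exact Filter.eventually_congr (hJ.mono fun x hx => by rw [hx])

theorem stmt10_general
    (G : Type) [CommGroup G] [TopologicalSpace G]
    [MeasurableSpace G]
    (μ : MeasureTheory.Measure G)
    [MeasurableSpace (PontryaginDual G)]
    (ν : MeasureTheory.Measure (PontryaginDual G))
    -- Λ a closed subgroup of the dual group Ĝ
    (Λ : Subgroup (PontryaginDual G))
    -- Π, a measurable section for G / Λ* (Λ* = the annihilator of Λ in G)
    (PiS : Set G)
    -- D, a measurable section for Ĝ / Λ
    (DS : Set (PontryaginDual G))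
    -- the modulation operators M_χ on L²(G) : (M_χ f)(x) = χ(x) f(x)
    (Mod : PontryaginDual G → (MeasureTheory.Lp ℂ 2 μ →L[ℂ] MeasureTheory.Lp ℂ 2 μ))
    -- the Fourier (Plancherel) transform F : L²(G) → L²(Ĝ), intertwining
    -- modulations with translations
    (F : MeasureTheory.Lp ℂ 2 μ ≃ₗᵢ[ℂ] MeasureTheory.Lp ℂ 2 ν)
    -- the Zak-type isometric isomorphism Z : L²(Ĝ) → L²(Π, L²(D)) of
    -- Bownik–Helson–Petersen, satisfying Z(T_λ φ) = X_λ|_Π · Z(φ) for λ ∈ Λ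
    (Z : MeasureTheory.Lp ℂ 2 ν ≃ₗᵢ[ℂ]
      MeasureTheory.Lp (MeasureTheory.Lp ℂ 2 (ν.restrict DS)) 2 (μ.restrict PiS))
-- J assigns to each Λ-modulation invariant subspace W its associated
    -- measurable range function J W, with orthogonal projections P W x onto J W x
    (J : Submodule ℂ (MeasureTheory.Lp ℂ 2 μ) → G →
      Submodule ℂ (MeasureTheory.Lp ℂ 2 (ν.restrict DS)))
    (P : Submodule ℂ (MeasureTheory.Lp ℂ 2 μ) → G →
      (MeasureTheory.Lp ℂ 2 (ν.restrict DS)) →L[ℂ] (MeasureTheory.Lp ℂ 2 (ν.restrict DS)))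
    (hJP : ∀ W : Submodule ℂ (MeasureTheory.Lp ℂ 2 μ),
      IsClosed (W : Set (MeasureTheory.Lp ℂ 2 μ)) →
      (∀ l ∈ Λ, ∀ f ∈ W, Mod l f ∈ W) →
      (∀ x, IsClosed ((J W x : Set (MeasureTheory.Lp ℂ 2 (ν.restrict DS))))) ∧
      (∀ x v, P W x v ∈ J W x ∧ ∀ w ∈ J W x, (inner ℂ (v - P W x v) w : ℂ) = 0) ∧
      (∀ a b : MeasureTheory.Lp ℂ 2 (ν.restrict DS),
        Measurable fun x => (inner ℂ (P W x a) b : ℂ)) ∧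
      (∀ f : MeasureTheory.Lp ℂ 2 μ,
        f ∈ W ↔ ∀ᵐ x ∂(μ.restrict PiS), (Z (F f)) x ∈ J W x))
    :
    ∀ V W U : Submodule ℂ (Lp ℂ 2 μ),
      (IsClosed (V : Set (Lp ℂ 2 μ)) ∧ ∀ l ∈ Λ, ∀ f ∈ V, Mod l f ∈ V) →
      (IsClosed (W : Set (Lp ℂ 2 μ)) ∧ ∀ l ∈ Λ, ∀ f ∈ W, Mod l f ∈ W) →
      (IsClosed (U : Set (Lp ℂ 2 μ)) ∧ ∀ l ∈ Λ, ∀ f ∈ U, Mod l f ∈ U) →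
      0 ≤ modMetric (μ.restrict PiS) P V W ∧
      (modMetric (μ.restrict PiS) P V W = 0 ↔ V = W) ∧
      modMetric (μ.restrict PiS) P V W = modMetric (μ.restrict PiS) P W V ∧
      modMetric (μ.restrict PiS) P V W ≤
        modMetric (μ.restrict PiS) P V U + modMetric (μ.restrict PiS) P U W := by
  intro V W U hV hW hU
  have hnorm : ∀ A : Submodule ℂ (Lp ℂ 2 μ),
      (IsClosed (A : Set (Lp ℂ 2 μ)) ∧ ∀ l ∈ Λ, ∀ f ∈ A, Mod l f ∈ A) → ∀ x, ‖P A x‖ ≤ 1 :=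
    fun A hA x =>
      IsOrthogonalProjectionOnto.norm_le_one ((hJP A hA.1 hA.2).1 x) ((hJP A hA.1 hA.2).2.1 x)
  refine ⟨modMetric_nonneg, (modMetric_eq_zero_iff (hnorm V hV) (hnorm W hW)).trans ⟨?_, ?_⟩,
    modMetric_comm, modMetric_le_add (hnorm V hV) (hnorm U hU) (hnorm W hW)⟩
  · intro hP
    obtain ⟨hVc, hVP, -, hVmem⟩ := hJP V hV.1 hV.2
    obtain ⟨hWc, hWP, -, hWmem⟩ := hJP W hW.1 hW.2
    refine SetLike.coe_injective (eq_of_mem_iff_ae_mem (fun f x => Z (F f) x) hVmem hWmem ?_)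
    filter_upwards [hP] with x hx
    exact congrArg _ (IsOrthogonalProjectionOnto.submodule_unique (hVc x) (hWc x) (hVP x) (hx ▸ hWP x))
  · rintro rfl
    exact ae_of_all _ fun _ => rfl

/-- Proposition 3.1. θ is a metric on MI(G), the collection of
all Λ-modulation invariant subspaces of L²(G). -/
theorem stmt10
    (G : Type) [CommGroup G] [TopologicalSpace G] [IsTopologicalGroup G]
    [LocallyCompactSpace G] [SecondCountableTopology G]
    [MeasurableSpace G] [BorelSpace G]
    (μ : MeasureTheory.Measure G) [μ.IsHaarMeasure]
    [MeasurableSpace (PontryaginDual G)] [BorelSpace (PontryaginDual G)]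
    [LocallyCompactSpace (PontryaginDual G)] [SecondCountableTopology (PontryaginDual G)]
    (ν : MeasureTheory.Measure (PontryaginDual G)) [ν.IsHaarMeasure]
    -- Λ a closed subgroup of the dual group Ĝ
    (Λ : Subgroup (PontryaginDual G)) (hΛ : IsClosed (Λ : Set (PontryaginDual G)))
    -- Π, a measurable section for G / Λ* (Λ* = the annihilator of Λ in G)
    (PiS : Set G) (hPiSmeas : MeasurableSet PiS)
    (hPiSsec : ∀ x : G, ∃! p, p ∈ PiS ∧ ∀ l ∈ Λ, l (x / p) = 1)
    -- D, a measurable section for Ĝ / Λ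
    (DS : Set (PontryaginDual G)) (hDSmeas : MeasurableSet DS)
    (hDSsec : ∀ χ : PontryaginDual G, ∃! d, d ∈ DS ∧ χ / d ∈ Λ)
    -- the modulation operators M_χ on L²(G) : (M_χ f)(x) = χ(x) f(x)
    (Mod : PontryaginDual G → (MeasureTheory.Lp ℂ 2 μ →L[ℂ] MeasureTheory.Lp ℂ 2 μ))
    (hMod : ∀ χ f, Mod χ f =ᵐ[μ] fun x => (χ x : ℂ) * f x)
    -- the translation operators T_λ on L²(Ĝ) : (T_λ g)(χ) = g(χ - λ)
    (Trans : PontryaginDual G → (MeasureTheory.Lp ℂ 2 ν →L[ℂ] MeasureTheory.Lp ℂ 2 ν))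
    (hTrans : ∀ l g, Trans l g =ᵐ[ν] fun χ => g (χ / l))
    -- the Fourier (Plancherel) transform F : L²(G) → L²(Ĝ), intertwining
    -- modulations with translations
    (F : MeasureTheory.Lp ℂ 2 μ ≃ₗᵢ[ℂ] MeasureTheory.Lp ℂ 2 ν)
    (hF : ∀ χ f, F (Mod χ f) = Trans χ (F f))
    -- the Zak-type isometric isomorphism Z : L²(Ĝ) → L²(Π, L²(D)) of
    -- Bownik–Helson–Petersen, satisfying Z(T_λ φ) = X_λ|_Π · Z(φ) for λ ∈ Λ
    (Z : MeasureTheory.Lp ℂ 2 ν ≃ₗᵢ[ℂ]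
      MeasureTheory.Lp (MeasureTheory.Lp ℂ 2 (ν.restrict DS)) 2 (μ.restrict PiS))
    (hZ : ∀ l ∈ Λ, ∀ g, Z (Trans l g) =ᵐ[μ.restrict PiS]
      fun x => ((l x : ℂ)) • (Z g) x)
-- J assigns to each Λ-modulation invariant subspace W its associated
    -- measurable range function J W, with orthogonal projections P W x onto J W x
    (J : Submodule ℂ (MeasureTheory.Lp ℂ 2 μ) → G →
      Submodule ℂ (MeasureTheory.Lp ℂ 2 (ν.restrict DS)))
    (P : Submodule ℂ (MeasureTheory.Lp ℂ 2 μ) → G →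
      (MeasureTheory.Lp ℂ 2 (ν.restrict DS)) →L[ℂ] (MeasureTheory.Lp ℂ 2 (ν.restrict DS)))
    (hJP : ∀ W : Submodule ℂ (MeasureTheory.Lp ℂ 2 μ),
      IsClosed (W : Set (MeasureTheory.Lp ℂ 2 μ)) →
      (∀ l ∈ Λ, ∀ f ∈ W, Mod l f ∈ W) →
      (∀ x, IsClosed ((J W x : Set (MeasureTheory.Lp ℂ 2 (ν.restrict DS))))) ∧
      (∀ x v, P W x v ∈ J W x ∧ ∀ w ∈ J W x, (inner ℂ (v - P W x v) w : ℂ) = 0) ∧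
      (∀ a b : MeasureTheory.Lp ℂ 2 (ν.restrict DS),
        Measurable fun x => (inner ℂ (P W x a) b : ℂ)) ∧
      (∀ f : MeasureTheory.Lp ℂ 2 μ,
        f ∈ W ↔ ∀ᵐ x ∂(μ.restrict PiS), (Z (F f)) x ∈ J W x))
    :
    ∀ V W U : Submodule ℂ (Lp ℂ 2 μ),
      (IsClosed (V : Set (Lp ℂ 2 μ)) ∧ ∀ l ∈ Λ, ∀ f ∈ V, Mod l f ∈ V) →
      (IsClosed (W : Set (Lp ℂ 2 μ)) ∧ ∀ l ∈ Λ, ∀ f ∈ W, Mod l f ∈ W) →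
      (IsClosed (U : Set (Lp ℂ 2 μ)) ∧ ∀ l ∈ Λ, ∀ f ∈ U, Mod l f ∈ U) →
      0 ≤ modMetric (μ.restrict PiS) P V W ∧
      (modMetric (μ.restrict PiS) P V W = 0 ↔ V = W) ∧
      modMetric (μ.restrict PiS) P V W = modMetric (μ.restrict PiS) P W V ∧
      modMetric (μ.restrict PiS) P V W ≤
        modMetric (μ.restrict PiS) P V U + modMetric (μ.restrict PiS) P U W :=
  stmt10_general G μ ν Λ PiS DS Mod F Z J P hJP
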